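/- In an orthomodular lattice, if b commutes with both a and c, then (a △ b) △ c = a △ (b △ c) and (b +_l a) +_l c = b +_l (a +_l c), where x △ y := (x ∨ y) ∧ (x' ∨ y') and x +_l y := (x ∨ (x' ∧ y)) ∧ (x' ∨ y'). -/

import Mathlib

/-- An orthomodular lattice: a bounded lattice with an orthocomplementation
satisfying the orthomodular law. -/
class OML (α : Type*) extends Lattice α, BoundedOrder α, Compl α where
  inf_compl : ∀ x : α, x ⊓ xᶜ = ⊥
  sup_compl : ∀ x : α, x ⊔ xᶜ = ⊤
  compl_compl : ∀ x : α, xᶜᶜ = x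
  compl_antitone : ∀ x y : α, x ≤ y → yᶜ ≤ xᶜ
  orthomodular : ∀ x y : α, x ≤ y → y = x ⊔ (y ⊓ xᶜ)

def tri {α : Type*} [OML α] (x y : α) : α := (x ⊔ y) ⊓ (xᶜ ⊔ yᶜ)
def pl {α : Type*} [OML α] (x y : α) : α := (x ⊔ (xᶜ ⊓ y)) ⊓ (xᶜ ⊔ yᶜ)

namespace OMLaux
variable {α : Type*} [OML α]

lemma cc (x : α) : xᶜᶜ = x := OML.compl_compl x
lemma anti {x y : α} (h : x ≤ y) : yᶜ ≤ xᶜ := OML.compl_antitone x y h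
lemma ic (x : α) : x ⊓ xᶜ = ⊥ := OML.inf_compl x
lemma om {x y : α} (h : x ≤ y) : y = x ⊔ (y ⊓ xᶜ) := OML.orthomodular x y h

lemma le_of_le_compl {x y : α} (h : x ≤ yᶜ) : y ≤ xᶜ := by
  have h2 := anti h; rwa [cc] at h2

lemma dm_sup (x y : α) : (x ⊔ y)ᶜ = xᶜ ⊓ yᶜ := by
  apply le_antisymm
  · exact le_inf (anti le_sup_left) (anti le_sup_right)
  · have hx : x ≤ (xᶜ ⊓ yᶜ)ᶜ := le_of_le_compl inf_le_left
    have hy : y ≤ (xᶜ ⊓ yᶜ)ᶜ := le_of_le_compl inf_le_right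
    have h := anti (sup_le hx hy); rwa [cc] at h

lemma dm_inf (x y : α) : (x ⊓ y)ᶜ = xᶜ ⊔ yᶜ := by
  have h := dm_sup xᶜ yᶜ; rw [cc, cc] at h
  rw [← h, cc]

lemma compl_inj {x y : α} (h : xᶜ = yᶜ) : x = y := by
  rw [← cc x, h, cc]

def Cm (x y : α) : Prop := x = (x ⊓ y) ⊔ (x ⊓ yᶜ)

lemma Cm.complr {x y : α} (h : Cm x y) : Cm x yᶜ := by
  unfold Cm at *; rw [cc, sup_comm]; exact h

lemma Cm.refl (x : α) : Cm x x := by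
  unfold Cm; rw [inf_idem, ic, sup_bot_eq]

lemma Cm_of_le {x y : α} (h : x ≤ y) : Cm x y := by
  unfold Cm; rw [inf_eq_left.mpr h, sup_eq_left.mpr inf_le_left]

lemma Cm_of_le_compl {x y : α} (h : x ≤ yᶜ) : Cm x y := by
  unfold Cm
  have h1 : x ⊓ y = ⊥ := by
    apply le_antisymm _ bot_le
    calc x ⊓ y ≤ yᶜ ⊓ y := inf_le_inf_right y h
      _ = ⊥ := by rw [inf_comm, ic]
  rw [h1, bot_sup_eq, inf_eq_left.mpr h]

lemma orth {u v : α} (h : u ≤ vᶜ) : (u ⊔ v) ⊓ uᶜ = v := by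
  have hv : v ≤ (u ⊔ v) ⊓ uᶜ := le_inf le_sup_right (le_of_le_compl h)
  have h2 := om hv
  have hz : (u ⊔ v) ⊓ uᶜ ⊓ vᶜ = ⊥ := by
    rw [inf_assoc, ← dm_sup, ic]
  rw [hz, sup_bot_eq] at h2
  exact h2

lemma Pl {a b : α} (h : Cm a b) : b ⊓ (a ⊔ bᶜ) = a ⊓ b := by
  have h1 : a ⊔ bᶜ = (a ⊓ b) ⊔ bᶜ := by
    conv_lhs => rw [h]
    rw [sup_assoc, sup_eq_right.mpr (inf_le_right : a ⊓ bᶜ ≤ bᶜ)]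
  rw [h1]
  have hx : a ⊓ b ≤ b ⊓ ((a ⊓ b) ⊔ bᶜ) := le_inf inf_le_right le_sup_left
  have h2 := om hx
  have hz : b ⊓ ((a ⊓ b) ⊔ bᶜ) ⊓ (a ⊓ b)ᶜ = ⊥ := by
    rw [inf_assoc, orth (show a ⊓ b ≤ bᶜᶜ by rw [cc]; exact inf_le_right), ic]
  rw [hz, sup_bot_eq] at h2
  exact h2

lemma Cm.symm {a b : α} (h : Cm a b) : Cm b a := by
  have hw : (b ⊓ a) ⊔ (b ⊓ aᶜ) ≤ b := sup_le inf_le_left inf_le_left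
  have h2 := om hw
  have hz : b ⊓ ((b ⊓ a) ⊔ (b ⊓ aᶜ))ᶜ = ⊥ := by
    rw [dm_sup]
    have k1 : b ⊓ (b ⊓ aᶜ)ᶜ = a ⊓ b := by
      rw [dm_inf, cc, sup_comm]; exact Pl h
    calc b ⊓ ((b ⊓ a)ᶜ ⊓ (b ⊓ aᶜ)ᶜ)
        = (b ⊓ (b ⊓ aᶜ)ᶜ) ⊓ (b ⊓ a)ᶜ := by
          rw [inf_comm ((b ⊓ a)ᶜ) ((b ⊓ aᶜ)ᶜ), ← inf_assoc]
      _ = (a ⊓ b) ⊓ (b ⊓ a)ᶜ := by rw [k1]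
      _ = (a ⊓ b) ⊓ (a ⊓ b)ᶜ := by rw [inf_comm b a]
      _ = ⊥ := ic _
  rw [hz, sup_bot_eq] at h2
  exact h2

lemma inf_compl_inf {a b : α} (h : Cm a b) : a ⊓ (a ⊓ b)ᶜ = a ⊓ bᶜ := by
  have hle : a ⊓ b ≤ (a ⊓ bᶜ)ᶜ := by
    have h1 : b ≤ (a ⊓ bᶜ)ᶜ := le_of_le_compl inf_le_right
    exact le_trans inf_le_right h1
  have h2 := orth hle
  rw [← h] at h2
  exact h2


lemma key {e f g : α} (hf : Cm e f) (hg : Cm e g) :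
    e ⊓ ((e ⊓ f)ᶜ ⊓ (e ⊓ g)ᶜ) = e ⊓ (fᶜ ⊓ gᶜ) := by
  calc e ⊓ ((e ⊓ f)ᶜ ⊓ (e ⊓ g)ᶜ)
      = (e ⊓ (e ⊓ f)ᶜ) ⊓ (e ⊓ g)ᶜ := by rw [inf_assoc]
    _ = (e ⊓ fᶜ) ⊓ (e ⊓ g)ᶜ := by rw [inf_compl_inf hf]
    _ = fᶜ ⊓ (e ⊓ (e ⊓ g)ᶜ) := by rw [inf_comm e fᶜ, inf_assoc]
    _ = fᶜ ⊓ (e ⊓ gᶜ) := by rw [inf_compl_inf hg]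
    _ = e ⊓ (fᶜ ⊓ gᶜ) := by rw [inf_comm fᶜ (e ⊓ gᶜ), inf_assoc, inf_comm gᶜ fᶜ]

lemma fh1 {e f g : α} (hf : Cm e f) (hg : Cm e g) :
    e ⊓ (f ⊔ g) = (e ⊓ f) ⊔ (e ⊓ g) := by
  have hw : (e ⊓ f) ⊔ (e ⊓ g) ≤ e ⊓ (f ⊔ g) :=
    sup_le (le_inf inf_le_left (le_trans inf_le_right le_sup_left))
           (le_inf inf_le_left (le_trans inf_le_right le_sup_right))
  have h2 := om hw
  have hz : e ⊓ (f ⊔ g) ⊓ ((e ⊓ f) ⊔ (e ⊓ g))ᶜ = ⊥ := by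
    rw [dm_sup]
    calc e ⊓ (f ⊔ g) ⊓ ((e ⊓ f)ᶜ ⊓ (e ⊓ g)ᶜ)
        = (f ⊔ g) ⊓ (e ⊓ ((e ⊓ f)ᶜ ⊓ (e ⊓ g)ᶜ)) := by
          rw [inf_comm e (f ⊔ g), inf_assoc]
      _ = (f ⊔ g) ⊓ (e ⊓ (fᶜ ⊓ gᶜ)) := by rw [key hf hg]
      _ = e ⊓ ((f ⊔ g) ⊓ (fᶜ ⊓ gᶜ)) := by rw [inf_left_comm]
      _ = ⊥ := by rw [← dm_sup, ic, inf_bot_eq]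
  rw [hz, sup_bot_eq] at h2
  exact h2

lemma Cm.sup {e f g : α} (hf : Cm e f) (hg : Cm e g) : Cm e (f ⊔ g) := by
  unfold Cm
  rw [fh1 hf hg, dm_sup]
  have hw : ((e ⊓ f) ⊔ (e ⊓ g)) ⊔ (e ⊓ (fᶜ ⊓ gᶜ)) ≤ e :=
    sup_le (sup_le inf_le_left inf_le_left) inf_le_left
  have h2 := om hw
  have hz : e ⊓ (((e ⊓ f) ⊔ (e ⊓ g)) ⊔ (e ⊓ (fᶜ ⊓ gᶜ)))ᶜ = ⊥ := by
    rw [dm_sup, dm_sup, ← inf_assoc, ← inf_assoc, inf_assoc e ((e ⊓ f)ᶜ) ((e ⊓ g)ᶜ),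
        key hf hg, ic]
  rw [hz, sup_bot_eq] at h2
  exact h2

lemma Cm.inf {e f g : α} (hf : Cm e f) (hg : Cm e g) : Cm e (f ⊓ g) := by
  have h := (hf.complr.sup hg.complr).complr
  rw [dm_sup, cc, cc] at h
  exact h

lemma fh2 {e f g : α} (hf : Cm e f) (hg : Cm e g) :
    e ⊔ (f ⊓ g) = (e ⊔ f) ⊓ (e ⊔ g) := by
  have hf' : Cm eᶜ fᶜ := hf.symm.complr.symm.complr
  have hg' : Cm eᶜ gᶜ := hg.symm.complr.symm.complr
  have h := fh1 hf' hg'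
  apply compl_inj
  rw [dm_sup, dm_inf, dm_inf, dm_sup, dm_sup]
  exact h



lemma pl_compl (x y : α) : (pl x y)ᶜ = pl xᶜ y := by
  unfold pl
  rw [cc, dm_inf, dm_sup, dm_inf, cc, dm_sup, cc x, cc y]
  -- goal should now be: (xᶜ ⊓ (x ⊔ yᶜ)) ⊔ (x ⊓ y) = (xᶜ ⊔ (x ⊓ y)) ⊓ (x ⊔ yᶜ)
  have h1 : Cm (x ⊓ y) xᶜ := Cm_of_le_compl (by rw [cc]; exact inf_le_left)
  have h2 : Cm (x ⊓ y) (x ⊔ yᶜ) := Cm_of_le (le_trans inf_le_left le_sup_left)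
  have h := fh2 h1 h2
  rw [sup_eq_right.mpr (le_trans (inf_le_left : x ⊓ y ≤ x) le_sup_left)] at h
  rw [sup_comm (x ⊓ y) xᶜ] at h
  rw [sup_comm (xᶜ ⊓ (x ⊔ yᶜ)) (x ⊓ y), h]

lemma inf_tri {e x y : α} (hx : Cm e x) (hy : Cm e y) :
    e ⊓ tri x y = ((e ⊓ x) ⊔ (e ⊓ y)) ⊓ ((e ⊓ xᶜ) ⊔ (e ⊓ yᶜ)) := by
  unfold tri
  rw [inf_inf_distrib_left, fh1 hx hy, fh1 hx.complr hy.complr]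

lemma inf_pl {e x y : α} (hx : Cm e x) (hy : Cm e y) :
    e ⊓ pl x y = ((e ⊓ x) ⊔ ((e ⊓ xᶜ) ⊓ (e ⊓ y))) ⊓ ((e ⊓ xᶜ) ⊔ (e ⊓ yᶜ)) := by
  unfold pl
  rw [inf_inf_distrib_left, fh1 hx (hx.complr.inf hy), fh1 hx.complr hy.complr,
      inf_inf_distrib_left]

-- complement-component lemma: if Cm e x and e⊓x = e⊓z then e⊓xᶜ = e⊓zᶜ
lemma inf_compl_of_inf {e x z : α} (hx : Cm e x) (hz : Cm e z)
    (h : e ⊓ x = e ⊓ z) : e ⊓ xᶜ = e ⊓ zᶜ := by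
  rw [← inf_compl_inf hx, h, inf_compl_inf hz]


lemma ic' (x : α) : xᶜ ⊓ x = ⊥ := by rw [inf_comm, ic]

lemma Cm_compl_self (e : α) : Cm eᶜ e := Cm_of_le_compl (le_refl _)

lemma Cm.compll {x y : α} (h : Cm x y) : Cm xᶜ y := h.symm.complr.symm

lemma Cm_tri {e x y : α} (hx : Cm e x) (hy : Cm e y) : Cm e (tri x y) :=
  (hx.sup hy).inf (hx.complr.sup hy.complr)

lemma Cm_pl {e x y : α} (hx : Cm e x) (hy : Cm e y) : Cm e (pl x y) :=
  (hx.sup (hx.complr.inf hy)).inf (hx.complr.sup hy.complr)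

lemma inf_tri_right {e x : α} (hx : Cm e x) : e ⊓ tri x e = e ⊓ xᶜ := by
  rw [inf_tri hx (Cm.refl e), inf_idem, ic, sup_bot_eq,
      sup_eq_right.mpr inf_le_left, ← inf_assoc, inf_idem]

lemma compl_inf_tri_right {e x : α} (hx : Cm eᶜ x) : eᶜ ⊓ tri x e = eᶜ ⊓ x := by
  rw [inf_tri hx (Cm_compl_self e), ic' , inf_idem, sup_bot_eq,
      sup_eq_right.mpr inf_le_left, inf_right_comm, inf_idem]

lemma inf_tri_left {e y : α} (hy : Cm e y) : e ⊓ tri e y = e ⊓ yᶜ := by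
  rw [inf_tri (Cm.refl e) hy, inf_idem, ic, bot_sup_eq,
      sup_eq_left.mpr inf_le_left, ← inf_assoc, inf_idem]

lemma compl_inf_tri_left {e y : α} (hy : Cm eᶜ y) : eᶜ ⊓ tri e y = eᶜ ⊓ y := by
  rw [inf_tri (Cm_compl_self e) hy, ic', inf_idem, bot_sup_eq,
      sup_eq_left.mpr inf_le_left, inf_right_comm, inf_idem]

lemma inf_pl_left {e y : α} (hy : Cm e y) : e ⊓ pl e y = e ⊓ yᶜ := by
  rw [inf_pl (Cm.refl e) hy, inf_idem, ic, bot_inf_eq, sup_bot_eq, bot_sup_eq,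
      ← inf_assoc, inf_idem]

lemma compl_inf_pl_left {e y : α} (hy : Cm eᶜ y) : eᶜ ⊓ pl e y = eᶜ ⊓ y := by
  rw [inf_pl (Cm_compl_self e) hy, ic', inf_idem, bot_sup_eq, ← inf_assoc, inf_idem,
      sup_eq_left.mpr inf_le_left, inf_right_comm, inf_idem]

lemma eq_of_components {b x y : α} (hx : Cm b x) (hy : Cm b y)
    (h1 : b ⊓ x = b ⊓ y) (h2 : bᶜ ⊓ x = bᶜ ⊓ y) : x = y := by
  have hx' := hx.symm
  have hy' := hy.symm
  conv_lhs => rw [hx']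
  conv_rhs => rw [hy']
  rw [inf_comm x b, inf_comm x bᶜ, inf_comm y b, inf_comm y bᶜ, h1, h2]

end OMLaux

open OMLaux in
theorem stmt_16 {α : Type*} [OML α] (a b c : α)
    (hba : b = (b ⊓ a) ⊔ (b ⊓ aᶜ)) (hbc : b = (b ⊓ c) ⊔ (b ⊓ cᶜ)) :
    tri (tri a b) c = tri a (tri b c) ∧ pl (pl b a) c = pl b (pl a c) := by
  have Hba : Cm b a := hba
  have Hbc : Cm b c := hbc
  have Hbb : Cm b b := Cm.refl b
  have Hba' : Cm b aᶜ := Hba.complr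
  have Hbc' : Cm b cᶜ := Hbc.complr
  have Hca : Cm bᶜ a := Hba.compll
  have Hcc : Cm bᶜ c := Hbc.compll
  have Hca' : Cm bᶜ aᶜ := Hca.complr
  have Hcc' : Cm bᶜ cᶜ := Hcc.complr
  -- tri part
  have Hb_t : Cm b (tri a b) := Cm_tri Hba Hbb
  have Hb_s : Cm b (tri b c) := Cm_tri Hbb Hbc
  have Hc_t : Cm bᶜ (tri a b) := Hb_t.compll
  have Hc_s : Cm bᶜ (tri b c) := Hb_s.compll
  have htb : b ⊓ tri a b = b ⊓ aᶜ := inf_tri_right Hba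
  have htb' : b ⊓ (tri a b)ᶜ = b ⊓ a := by
    have h := inf_compl_of_inf Hb_t Hba' htb; rwa [cc] at h
  have hsb : b ⊓ tri b c = b ⊓ cᶜ := inf_tri_left Hbc
  have hsb' : b ⊓ (tri b c)ᶜ = b ⊓ c := by
    have h := inf_compl_of_inf Hb_s Hbc' hsb; rwa [cc] at h
  have htc : bᶜ ⊓ tri a b = bᶜ ⊓ a := compl_inf_tri_right Hca
  have htc' : bᶜ ⊓ (tri a b)ᶜ = bᶜ ⊓ aᶜ := inf_compl_of_inf Hc_t Hca htc
  have hsc : bᶜ ⊓ tri b c = bᶜ ⊓ c := compl_inf_tri_left Hcc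
  have hsc' : bᶜ ⊓ (tri b c)ᶜ = bᶜ ⊓ cᶜ := inf_compl_of_inf Hc_s Hcc hsc
  have T1 : b ⊓ tri (tri a b) c = b ⊓ tri a (tri b c) := by
    rw [inf_tri Hb_t Hbc, inf_tri Hba Hb_s, htb, htb', hsb, hsb']
    exact inf_comm _ _
  have T2 : bᶜ ⊓ tri (tri a b) c = bᶜ ⊓ tri a (tri b c) := by
    rw [inf_tri Hc_t Hcc, inf_tri Hca Hc_s, htc, htc', hsc, hsc']
  refine ⟨eq_of_components (Cm_tri Hb_t Hbc) (Cm_tri Hba Hb_s) T1 T2, ?_⟩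
  -- pl part
  have Hb_p : Cm b (pl b a) := Cm_pl Hbb Hba
  have Hb_q : Cm b (pl a c) := Cm_pl Hba Hbc
  have Hc_p : Cm bᶜ (pl b a) := Hb_p.compll
  have Hc_q : Cm bᶜ (pl a c) := Hb_q.compll
  have hpb : b ⊓ pl b a = b ⊓ aᶜ := inf_pl_left Hba
  have hpb' : b ⊓ (pl b a)ᶜ = b ⊓ a := by
    have h := inf_compl_of_inf Hb_p Hba' hpb; rwa [cc] at h
  have hpc : bᶜ ⊓ pl b a = bᶜ ⊓ a := compl_inf_pl_left Hca
  have hpc' : bᶜ ⊓ (pl b a)ᶜ = bᶜ ⊓ aᶜ := inf_compl_of_inf Hc_p Hca hpc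
  have P1 : b ⊓ pl (pl b a) c = b ⊓ pl b (pl a c) := by
    rw [inf_pl Hb_p Hbc, hpb, hpb', inf_pl_left Hb_q, pl_compl a c,
        inf_pl Hba' Hbc, cc]
  have P2 : bᶜ ⊓ pl (pl b a) c = bᶜ ⊓ pl b (pl a c) := by
    rw [inf_pl Hc_p Hcc, hpc, hpc', compl_inf_pl_left Hc_q, inf_pl Hca Hcc]
  exact eq_of_components (Cm_pl Hb_p Hbc) (Cm_pl Hbb Hb_q) P1 P2
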